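/- arXiv:2408.09155 — 2 statements merged into one kernel-verified Lean document; each statement's English description precedes it below -/
import Mathlib

section
/- Let (Ω, ℱ, P) be a probability space with Ω a standard Borel space, 𝒳 a standard Borel space, X : Ω → 𝒳 measurable, A : Ω → {−1, 1} a random variable, and T, C : Ω → ℝ random variables with 0 ≤ T ≤ h almost surely for some h > 0, such that T and C are conditionally independent given σ(X, A). Set Y = min(T, C) and Δ = 1{T ≤ C}. Let κ be a regular conditional distribution of C given (X, A), set S_C(t, x, a) = κ(x, a)([t, ∞)), and assume S_C(h, X, A) ≥ η_C almost surely for some η_C > 0. Let π : {−1,1} × 𝒳 → ℝ be measurable with η ≤ π ≤ 1 for some η > 0, let d : 𝒳 → {−1, 1} be measurable, and let τ ∈ ℝ. Then for every c ≥ 0, E[max(0, c(τ − T) + 1) · 1{A = d(X)} / π(A, X)] = E[Δ·max(0, c(τ − Y) + 1) · 1{A = d(X)} / (S_C(Y, X, A)·π(A, X))], and consequently inf_{c ≥ 0} E[max(0, c(τ − T) + 1)·1{A = d(X)}/π(A, X)] = inf_{c ≥ 0} E[Δ·max(0, c(τ − Y) + 1)·1{A = d(X)}/(S_C(Y, X,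 A)·π(A, X))]. -/
/-!
Conditional independence of `T` and `C` given `Z = (X, A)`, with `κ` a version of the conditional
law of `C` given `Z`, says that the joint law of `((Z, T), C)` is the law of `(Z, T)` followed by
the kernel `(z, t) ↦ κ z`. Integrating `1{t ≤ c} φ(z, t)` against it gives
`E[Δ φ(Z, T)] = E[φ(Z, T) S_C(T, Z)]`. With `φ = g / S_C`, which is legitimate because
`S_C(T, Z) ≥ S_C(h, Z) ≥ η_C > 0`, and `Y = T` on `{Δ = 1}`, this is the inverse probability of
censoring weighting identity `E[g(Z, T)] = E[Δ g(Z, Y) / S_C(Y, Z)]`. All integrands are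
nonnegative, so the computation runs with lower Lebesgue integrals and needs no integrability.
-/

open MeasureTheory ProbabilityTheory Set
open scoped ENNReal

lemma MeasureTheory.Measure.measurable_of_measurable_toReal_coe {α β : Type*}
    [MeasurableSpace α] [MeasurableSpace β] (μ : β → Measure α)
    (hμ : ∀ b, IsFiniteMeasure (μ b))
    (h : ∀ s, MeasurableSet s → Measurable fun b => (μ b s).toReal) : Measurable μ := by
  refine Measure.measurable_of_measurable_coe μ fun s hs => ?_
  simpa only [ENNReal.ofReal_toReal (@measure_ne_top _ _ _ (hμ _) s)] using
    (h s hs).ennreal_ofReal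

namespace ProbabilityTheory

lemma Kernel.measurable_apply_Ici {β : Type*} [MeasurableSpace β] (K : Kernel β ℝ)
    [IsSFiniteKernel K] : Measurable fun p : β × ℝ => K p.1 (Ici p.2) :=
  (K.prodMkRight ℝ).measurable_kernel_prodMk_left (t := {q | q.1.2 ≤ q.2})
    (measurableSet_le (measurable_snd.comp measurable_fst) measurable_snd)

lemma lintegral_compProd_prodMkRight_ite_le {β : Type*} [MeasurableSpace β]
    (μ : Measure (β × ℝ)) [SFinite μ] (K : Kernel β ℝ) [IsSFiniteKernel K]
    {φ : β × ℝ → ℝ≥0∞} (hφ : Measurable φ) :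
    ∫⁻ q, (if q.1.2 ≤ q.2 then φ q.1 else 0) ∂(μ ⊗ₘ K.prodMkRight ℝ)
      = ∫⁻ p, φ p * K p.1 (Ici p.2) ∂μ := by
  have hmeas : Measurable fun q : (β × ℝ) × ℝ => if q.1.2 ≤ q.2 then φ q.1 else 0 :=
    Measurable.ite (measurableSet_le (by fun_prop) (by fun_prop)) (by fun_prop) (by fun_prop)
  rw [Measure.lintegral_compProd hmeas]
  refine lintegral_congr fun p => ?_
  rw [← lintegral_indicator_const measurableSet_Ici]
  rfl

variable {Ω β : Type*} {mΩ : MeasurableSpace Ω} [MeasurableSpace β]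
  {P : Measure Ω} [IsFiniteMeasure P] {Z : Ω → β}

lemma condDistrib_ae_eq_of_forall_condExp_eq {δ : Type*} [MeasurableSpace δ]
    [StandardBorelSpace δ] [Nonempty δ] {C : Ω → δ} (hZ : Measurable Z) (hC : Measurable C)
    (K : Kernel β δ) [IsFiniteKernel K]
    (hK : ∀ t, MeasurableSet t →
      (fun ω => (K (Z ω) t).toReal) =ᵐ[P] P⟦C ⁻¹' t | MeasurableSpace.comap Z inferInstance⟧) :
    condDistrib C Z P =ᵐ[P.map Z] K := by
  refine condDistrib_ae_eq_of_measure_eq_compProd Z hC.aemeasurable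
    (Measure.ext_prod fun {B t} hB ht => ?_)
  have hKcd : ∀ᵐ ω ∂P, condDistrib C Z P (Z ω) t = K (Z ω) t := by
    filter_upwards [condDistrib_ae_eq_condExp hZ hC ht, hK t ht] with ω hcd hKω
    exact (ENNReal.toReal_eq_toReal_iff' (measure_ne_top _ _) (measure_ne_top _ _)).1
      (hcd.trans hKω.symm)
  rw [Measure.map_apply (hZ.prodMk hC) (hB.prod ht), mk_preimage_prod,
    ← setLIntegral_preimage_condDistrib hZ hC.aemeasurable ht hB,
    Measure.compProd_apply_prod hB ht, setLIntegral_map hB (K.measurable_coe ht) hZ]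
  exact setLIntegral_congr_fun_ae (hZ hB) (hKcd.mono fun ω h _ => h)

lemma map_prod_eq_compProd_prodMkRight [StandardBorelSpace Ω] {γ δ : Type*}
    [MeasurableSpace γ] [StandardBorelSpace γ] [Nonempty γ]
    [MeasurableSpace δ] [StandardBorelSpace δ] [Nonempty δ]
    {T : Ω → γ} {C : Ω → δ} (hZ : Measurable Z) (hT : Measurable T) (hC : Measurable C)
    (hindep : T ⟂ᵢ[Z, hZ; P] C) (K : Kernel β δ) [IsFiniteKernel K]
    (hK : condDistrib C Z P =ᵐ[P.map Z] K) :
    P.map (fun ω => ((Z ω, T ω), C ω)) = P.map (fun ω => (Z ω, T ω)) ⊗ₘ K.prodMkRight γ := by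
  have hfst : (P.map fun ω => (Z ω, T ω)).map Prod.fst = P.map Z := by
    rw [Measure.map_map measurable_fst (hZ.prodMk hT)]; rfl
  have hK' : (condDistrib C Z P).prodMkRight γ =ᵐ[P.map fun ω => (Z ω, T ω)] K.prodMkRight γ :=
    ae_of_ae_map (p := fun z => condDistrib C Z P z = K z) measurable_fst.aemeasurable
      (hfst ▸ hK)
  rw [← compProd_map_condDistrib hC.aemeasurable, Measure.compProd_congr
    (((condIndepFun_iff_condDistrib_prod_ae_eq_prodMkRight hC hT hZ).1 hindep).trans hK')]

variable {T C : Ω → ℝ} (K : Kernel β ℝ)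

theorem lintegral_ite_le_eq_lintegral_mul_survival [IsSFiniteKernel K]
    (hZ : Measurable Z) (hT : Measurable T) (hC : Measurable C)
    (hlaw : P.map (fun ω => ((Z ω, T ω), C ω)) = P.map (fun ω => (Z ω, T ω)) ⊗ₘ K.prodMkRight ℝ)
    {φ : β × ℝ → ℝ≥0∞} (hφ : Measurable φ) :
    ∫⁻ ω, (if T ω ≤ C ω then φ (Z ω, T ω) else 0) ∂P
      = ∫⁻ ω, φ (Z ω, T ω) * K (Z ω) (Ici (T ω)) ∂P := by
  have hmeas : Measurable fun q : (β × ℝ) × ℝ => if q.1.2 ≤ q.2 then φ q.1 else 0 :=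
    Measurable.ite (measurableSet_le (by fun_prop) (by fun_prop)) (by fun_prop) (by fun_prop)
  calc ∫⁻ ω, (if T ω ≤ C ω then φ (Z ω, T ω) else 0) ∂P
      = ∫⁻ q, (if q.1.2 ≤ q.2 then φ q.1 else 0) ∂(P.map fun ω => ((Z ω, T ω), C ω)) :=
        (lintegral_map hmeas ((hZ.prodMk hT).prodMk hC)).symm
    _ = ∫⁻ p, φ p * K p.1 (Ici p.2) ∂(P.map fun ω => (Z ω, T ω)) := by
        rw [hlaw, lintegral_compProd_prodMkRight_ite_le _ _ hφ]
    _ = ∫⁻ ω, φ (Z ω, T ω) * K (Z ω) (Ici (T ω)) ∂P :=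
        lintegral_map (hφ.mul K.measurable_apply_Ici) (hZ.prodMk hT)

theorem integral_eq_integral_ite_le_div_survival [IsFiniteKernel K]
    (hZ : Measurable Z) (hT : Measurable T) (hC : Measurable C)
    (hlaw : P.map (fun ω => ((Z ω, T ω), C ω)) = P.map (fun ω => (Z ω, T ω)) ⊗ₘ K.prodMkRight ℝ)
    (hS : ∀ᵐ ω ∂P, K (Z ω) (Ici (T ω)) ≠ 0)
    {g : β × ℝ → ℝ} (hg : Measurable g) (hg0 : 0 ≤ g) :
    ∫ ω, g (Z ω, T ω) ∂P
      = ∫ ω, (if T ω ≤ C ω then 1 else 0) * g (Z ω, min (T ω) (C ω))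
          / (K (Z ω) (Ici (min (T ω) (C ω)))).toReal ∂P := by
  set S : β × ℝ → ℝ := fun p => (K p.1 (Ici p.2)).toReal
  have hS_meas : Measurable S := K.measurable_apply_Ici.ennreal_toReal
  have hrhs : (fun ω => (if T ω ≤ C ω then 1 else 0) * g (Z ω, min (T ω) (C ω))
        / (K (Z ω) (Ici (min (T ω) (C ω)))).toReal)
      = fun ω => if T ω ≤ C ω then g (Z ω, T ω) / S (Z ω, T ω) else 0 := by
    funext ω
    split_ifs with hTC
    · rw [min_eq_left hTC, one_mul]
    · rw [zero_mul, zero_div]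
  have hcancel : ∀ᵐ ω ∂P, ENNReal.ofReal (g (Z ω, T ω) / S (Z ω, T ω)) * K (Z ω) (Ici (T ω))
      = ENNReal.ofReal (g (Z ω, T ω)) := by
    filter_upwards [hS] with ω hω
    have hfin := measure_ne_top (K (Z ω)) (Ici (T ω))
    rw [ENNReal.ofReal_div_of_pos (ENNReal.toReal_pos hω hfin), ENNReal.ofReal_toReal hfin,
      ENNReal.div_mul_cancel hω hfin]
  rw [hrhs, integral_eq_lintegral_of_nonneg_ae (f := fun ω => g (Z ω, T ω))
      (ae_of_all _ fun ω => hg0 _)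
      (hg.comp (hZ.prodMk hT)).aestronglyMeasurable,
    integral_eq_lintegral_of_nonneg_ae ?_ ?_]
  · congr 1
    calc ∫⁻ ω, ENNReal.ofReal (g (Z ω, T ω)) ∂P
        = ∫⁻ ω, ENNReal.ofReal (g (Z ω, T ω) / S (Z ω, T ω)) * K (Z ω) (Ici (T ω)) ∂P :=
          (lintegral_congr_ae hcancel).symm
      _ = ∫⁻ ω, (if T ω ≤ C ω then ENNReal.ofReal (g (Z ω, T ω) / S (Z ω, T ω)) else 0) ∂P :=
          (lintegral_ite_le_eq_lintegral_mul_survival K hZ hT hC hlaw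
            (hg.div hS_meas).ennreal_ofReal).symm
      _ = _ := lintegral_congr fun ω => by split_ifs <;> simp
  · exact ae_of_all _ fun ω => by
      dsimp only
      split_ifs
      exacts [div_nonneg (hg0 _) ENNReal.toReal_nonneg, le_rfl]
  · exact (Measurable.ite (measurableSet_le hT hC) ((hg.div hS_meas).comp (hZ.prodMk hT))
      measurable_const).aestronglyMeasurable

end ProbabilityTheory

theorem stmt_5_general {Ω 𝒳 : Type*} [mΩ : MeasurableSpace Ω] [StandardBorelSpace Ω]
    [MeasurableSpace 𝒳]
    (P : Measure Ω) [IsProbabilityMeasure P]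
    (X : Ω → 𝒳) (hX : Measurable X)
    (A : Ω → ℝ) (hA : Measurable A)
    (T C : Ω → ℝ) (hT : Measurable T) (hC : Measurable C)
    (h : ℝ) (hTb : ∀ᵐ ω ∂P, 0 ≤ T ω ∧ T ω ≤ h)
    (hindep : CondIndepFun (MeasurableSpace.comap (fun ω => (X ω, A ω)) inferInstance)
      ((hX.prodMk hA).comap_le) T C P)
    (κ : 𝒳 → ℝ → Measure ℝ) (hκprob : ∀ x a, IsProbabilityMeasure (κ x a))
    (hκmeas : ∀ B : Set ℝ, MeasurableSet B →
      Measurable fun p : 𝒳 × ℝ => (κ p.1 p.2 B).toReal)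
    (hκver : ∀ B : Set ℝ, MeasurableSet B →
      (fun ω => (κ (X ω) (A ω) B).toReal) =ᵐ[P]
        P[fun ω => B.indicator (fun _ => (1 : ℝ)) (C ω) |
          MeasurableSpace.comap (fun ω => (X ω, A ω)) inferInstance])
    (ηC : ℝ) (hηC : 0 < ηC)
    (hSpos : ∀ᵐ ω ∂P, ηC ≤ (κ (X ω) (A ω) (Set.Ici h)).toReal)
    (π : ℝ × 𝒳 → ℝ) (hπ : Measurable π) (η : ℝ) (hη : 0 < η)
    (hπb : ∀ a x, η ≤ π (a, x) ∧ π (a, x) ≤ 1)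
    (d : 𝒳 → ℝ) (hd : Measurable d)
    (τ : ℝ) :
    (∀ c : ℝ, 0 ≤ c →
      ∫ ω, max 0 (c * (τ - T ω) + 1) * (if A ω = d (X ω) then (1 : ℝ) else 0)
          / π (A ω, X ω) ∂P
        = ∫ ω, (if T ω ≤ C ω then (1 : ℝ) else 0)
            * max 0 (c * (τ - min (T ω) (C ω)) + 1)
            * (if A ω = d (X ω) then (1 : ℝ) else 0)
            / ((κ (X ω) (A ω) (Set.Ici (min (T ω) (C ω)))).toReal * π (A ω, X ω)) ∂P) ∧
    ((⨅ c : Set.Ici (0 : ℝ),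
        ∫ ω, max 0 ((c : ℝ) * (τ - T ω) + 1) * (if A ω = d (X ω) then (1 : ℝ) else 0)
          / π (A ω, X ω) ∂P)
      = ⨅ c : Set.Ici (0 : ℝ),
        ∫ ω, (if T ω ≤ C ω then (1 : ℝ) else 0)
            * max 0 ((c : ℝ) * (τ - min (T ω) (C ω)) + 1)
            * (if A ω = d (X ω) then (1 : ℝ) else 0)
            / ((κ (X ω) (A ω) (Set.Ici (min (T ω) (C ω)))).toReal * π (A ω, X ω)) ∂P) := by
  have hZ : Measurable fun ω => (X ω, A ω) := hX.prodMk hA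
  let K : Kernel (𝒳 × ℝ) ℝ := ⟨fun p => κ p.1 p.2, Measure.measurable_of_measurable_toReal_coe _
    (fun p => by have := hκprob p.1 p.2; infer_instance) hκmeas⟩
  have : IsMarkovKernel K := ⟨fun p => hκprob p.1 p.2⟩
  have hlaw := map_prod_eq_compProd_prodMkRight hZ hT hC hindep K
    (condDistrib_ae_eq_of_forall_condExp_eq hZ hC K hκver)
  have hS : ∀ᵐ ω ∂P, K (X ω, A ω) (Ici (T ω)) ≠ 0 := by
    filter_upwards [hTb, hSpos] with ω hTω hSω hzero
    have hzero_h : κ (X ω) (A ω) (Ici h) = 0 :=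
      measure_mono_null (Ici_subset_Ici.2 hTω.2) hzero
    rw [hzero_h, ENNReal.toReal_zero] at hSω
    exact hηC.not_ge hSω
  let g : ℝ → (𝒳 × ℝ) × ℝ → ℝ := fun c q =>
    max 0 (c * (τ - q.2) + 1) * (if q.1.2 = d q.1.1 then 1 else 0) / π (q.1.2, q.1.1)
  have hg (c : ℝ) : Measurable (g c) :=
    ((measurable_const.max (by fun_prop)).mul (Measurable.ite
      (measurableSet_eq_fun (by fun_prop) (hd.comp (by fun_prop))) measurable_const
      measurable_const)).div (hπ.comp (by fun_prop))
  have hg0 (c : ℝ) : 0 ≤ g c := fun q =>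
    div_nonneg (mul_nonneg (le_max_left _ _) (by split_ifs <;> norm_num))
      (hη.le.trans (hπb _ _).1)
  have hipcw (c : ℝ) :=
    integral_eq_integral_ite_le_div_survival K hZ hT hC hlaw hS (hg c) (hg0 c)
  refine ⟨fun c _ => ?_, iInf_congr fun c => ?_⟩ <;>
  · refine (hipcw _).trans (congrArg (integral P) (funext fun ω => ?_))
    change _ = _ * _ * _ / ((K (X ω, A ω) _).toReal * _)
    ring

/-- Buffered-criterion part of Lemma 2 of the paper. With right-censored data
`Y = min(T,C)`, `Δ = 1{T ≤ C}`, conditional censoring survival function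
`S_C(t,x,a) = κ x a [t,∞)` and propensity `π`, for every `c ≥ 0`,
`E[max(0, c(τ-T)+1)·1{A=d(X)}/π(A,X)]
  = E[Δ·max(0, c(τ-Y)+1)·1{A=d(X)}/(S_C(Y,X,A)π(A,X))]`,
and consequently the corresponding infima over `c ≥ 0` agree. -/
theorem stmt_5 {Ω 𝒳 : Type*} [mΩ : MeasurableSpace Ω] [StandardBorelSpace Ω]
    [MeasurableSpace 𝒳]
    (P : Measure Ω) [IsProbabilityMeasure P]
    (X : Ω → 𝒳) (hX : Measurable X)
    (A : Ω → ℝ) (hA : Measurable A) (hAval : ∀ ω, A ω = 1 ∨ A ω = -1)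
    (T C : Ω → ℝ) (hT : Measurable T) (hC : Measurable C)
    (h : ℝ) (hh : 0 < h) (hTb : ∀ᵐ ω ∂P, 0 ≤ T ω ∧ T ω ≤ h)
    (hindep : CondIndepFun (MeasurableSpace.comap (fun ω => (X ω, A ω)) inferInstance)
      ((hX.prodMk hA).comap_le) T C P)
    (κ : 𝒳 → ℝ → Measure ℝ) (hκprob : ∀ x a, IsProbabilityMeasure (κ x a))
    (hκmeas : ∀ B : Set ℝ, MeasurableSet B →
      Measurable fun p : 𝒳 × ℝ => (κ p.1 p.2 B).toReal)
    (hκver : ∀ B : Set ℝ, MeasurableSet B →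
      (fun ω => (κ (X ω) (A ω) B).toReal) =ᵐ[P]
        P[fun ω => B.indicator (fun _ => (1 : ℝ)) (C ω) |
          MeasurableSpace.comap (fun ω => (X ω, A ω)) inferInstance])
    (ηC : ℝ) (hηC : 0 < ηC)
    (hSpos : ∀ᵐ ω ∂P, ηC ≤ (κ (X ω) (A ω) (Set.Ici h)).toReal)
    (π : ℝ × 𝒳 → ℝ) (hπ : Measurable π) (η : ℝ) (hη : 0 < η)
    (hπb : ∀ a x, η ≤ π (a, x) ∧ π (a, x) ≤ 1)
    (d : 𝒳 → ℝ) (hd : Measurable d) (hdval : ∀ x, d x = 1 ∨ d x = -1)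
    (τ : ℝ) :
    (∀ c : ℝ, 0 ≤ c →
      ∫ ω, max 0 (c * (τ - T ω) + 1) * (if A ω = d (X ω) then (1 : ℝ) else 0)
          / π (A ω, X ω) ∂P
        = ∫ ω, (if T ω ≤ C ω then (1 : ℝ) else 0)
            * max 0 (c * (τ - min (T ω) (C ω)) + 1)
            * (if A ω = d (X ω) then (1 : ℝ) else 0)
            / ((κ (X ω) (A ω) (Set.Ici (min (T ω) (C ω)))).toReal * π (A ω, X ω)) ∂P) ∧
    ((⨅ c : Set.Ici (0 : ℝ),
        ∫ ω, max 0 ((c : ℝ) * (τ - T ω) + 1) * (if A ω = d (X ω) then (1 : ℝ) else 0)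
          / π (A ω, X ω) ∂P)
      = ⨅ c : Set.Ici (0 : ℝ),
        ∫ ω, (if T ω ≤ C ω then (1 : ℝ) else 0)
            * max 0 ((c : ℝ) * (τ - min (T ω) (C ω)) + 1)
            * (if A ω = d (X ω) then (1 : ℝ) else 0)
            / ((κ (X ω) (A ω) (Set.Ici (min (T ω) (C ω)))).toReal * π (A ω, X ω)) ∂P) :=
  stmt_5_general (mΩ := mΩ) P X hX A hA T C hT hC h hTb hindep κ hκprob hκmeas hκver ηC hηC hSpos π
    hπ η hη hπb d hd τ
end

section
/- Let δ > 0 and define the doubled smoothed ramp loss L : ℝ → ℝ by L(u) = 0 for u ≤ −δ, L(u) = (1 + u/δ)² for −δ < u ≤ 0, L(u) = 2 − (1 − u/δ)² for 0 < u < δ, and L(u) = 2 for u ≥ δ; define sign(t) = 1 if t ≥ 0 and sign(t) = −1 if t < 0. Let (Ω, ℱ, P) be a probability space, 𝒳 a measurable space, X : Ω → 𝒳 measurable, A : Ω → {−1, 1} a random variable, Y : Ω → ℝ a random variable with 0 ≤ Y ≤ h almost surely for some h > 0, and Δ : Ω → {0, 1} a random variable. Let π : {−1,1} × 𝒳 →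 ℝ be measurable with η ≤ π(a, x) ≤ 1 for all (a, x) and some η > 0, such that for each a ∈ {−1, 1}, ω ↦ π(a, X(ω)) is a version of P(A = a ∣ σ(X)). Let S̃ : ℝ × 𝒳 × {−1,1} → ℝ be measurable with η_C ≤ S̃ ≤ 1 for some η_C > 0, and fix γ ∈ (0,1). Define V'_L(f, α) and V'(d, α) as in the CVaR criterion: V'_L(f, α) = E[(αγ − Δ·(α − Y)·1{Y ≤ α}/S̃(Y, X, A)) · L(A·f(X))/π(A, X)] and V'(d, α) = E[(αγ − Δ·(α − Y)·1{Y ≤ α}/S̃(Y, X, A)) · 1{A = d(X)}/π(A, X)]. Suppose a measurable f̃ : 𝒳 → ℝ and α̃ ∈ ℝ satisfy V'_L(f̃, α̃) ≥ V'_L(f, α) for every measurable f and every α ∈ ℝ. Then for every measurable f : 𝒳 → ℝ and every α ∈ ℝ, sup over measurable f′ : 𝒳 → ℝ and α′ ∈ ℝ of V'(sign∘f′, α′), minus V'(sign∘f, α), is at most V'_L(f̃, α̃) − V'_L(f, α). -/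
/-!
With `A = ±1` and `L(-u) = 2 - L(u)`, both value functions at level `β` split as
`V'(sign ∘ f, β) = ∫ b + ∫ 1{f(X) ≥ 0} • D` and `V'_L(f, β) = 2 ∫ b + ∫ L(f(X)) • D`, where
`b = cvarBaseline` and `D = cvarContrast` is the inverse-propensity-weighted contrast of the two
actions. Conditioning on `X`, `∫ c(X) • D ≤ ∫ (E[D | X])⁺` whenever `0 ≤ c ≤ 1`, with equality
for `c = 1{E[D | X] ≥ 0}`. With `U(β) = ∫ b + ∫ (E[D | X])⁺` this gives `V'(d, β) ≤ U(β)` for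
every rule, `V'_L(f, β) - V'(sign ∘ f, β) ≤ U(β)` since `L(f) - 1{f ≥ 0}` lies in `[0, 1]`, and
`2 U(β) ≤ V'_L(f̃, α̃)` since the surrogate attains `2 U(β)` at `f = ±δ`. Adding the first two
bounds at `α'` and `α` and the third at both levels proves the theorem.
-/

open MeasureTheory

/-- The doubled smoothed ramp loss: `L(u) = 0` for `u ≤ -δ`, `(1+u/δ)²` for `-δ < u ≤ 0`,
`2 - (1-u/δ)²` for `0 < u < δ`, and `2` for `u ≥ δ`. -/
noncomputable def rampL (δ u : ℝ) : ℝ :=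
  if u ≤ -δ then 0
  else if u ≤ 0 then (1 + u / δ) ^ 2
  else if u < δ then 2 - (1 - u / δ) ^ 2
  else 2

/-- `sgn t = 1` if `t ≥ 0` and `-1` if `t < 0`. -/
noncomputable def sgn (t : ℝ) : ℝ := if 0 ≤ t then 1 else -1

/-- Surrogate CVaR-criterion value
`V'_L(f, α) = E[(αγ - Δ(α-Y)1{Y≤α}/S̃(Y,X,A)) · L(A f(X)) / π(A,X)]`. -/
noncomputable def VLcvar {Ω 𝒳 : Type*} [MeasurableSpace Ω] [MeasurableSpace 𝒳]
    (P : Measure Ω) (X : Ω → 𝒳) (A Y Δc : Ω → ℝ) (S : ℝ × 𝒳 × ℝ → ℝ) (π : ℝ × 𝒳 → ℝ)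
    (γ δ : ℝ) (f : 𝒳 → ℝ) (α : ℝ) : ℝ :=
  ∫ ω, (α * γ - Δc ω * (α - Y ω) * (if Y ω ≤ α then (1 : ℝ) else 0) / S (Y ω, X ω, A ω))
      * rampL δ (A ω * f (X ω)) / π (A ω, X ω) ∂P

/-- CVaR-criterion value
`V'(d, α) = E[(αγ - Δ(α-Y)1{Y≤α}/S̃(Y,X,A)) · 1{A = d(X)} / π(A,X)]`. -/
noncomputable def Vcvar {Ω 𝒳 : Type*} [MeasurableSpace Ω] [MeasurableSpace 𝒳]
    (P : Measure Ω) (X : Ω → 𝒳) (A Y Δc : Ω → ℝ) (S : ℝ × 𝒳 × ℝ → ℝ) (π : ℝ × 𝒳 → ℝ)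
    (γ : ℝ) (d : 𝒳 → ℝ) (α : ℝ) : ℝ :=
  ∫ ω, (α * γ - Δc ω * (α - Y ω) * (if Y ω ≤ α then (1 : ℝ) else 0) / S (Y ω, X ω, A ω))
      * (if A ω = d (X ω) then (1 : ℝ) else 0) / π (A ω, X ω) ∂P

theorem rampL_nonneg {δ : ℝ} (hδ : 0 < δ) (u : ℝ) : 0 ≤ rampL δ u := by
  unfold rampL
  split_ifs with _ h₂ h₃
  · exact le_rfl
  · positivity
  · have : u / δ < 1 := (div_lt_one hδ).2 h₃
    nlinarith [div_pos (not_le.1 h₂) hδ]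
  · norm_num

theorem one_le_rampL {δ : ℝ} (hδ : 0 < δ) {u : ℝ} (hu : 0 ≤ u) : 1 ≤ rampL δ u := by
  unfold rampL
  split_ifs with _ h₂ h₃
  · linarith
  · rw [le_antisymm h₂ hu, zero_div, add_zero, one_pow]
  · have : u / δ < 1 := (div_lt_one hδ).2 h₃
    nlinarith [div_pos (not_le.1 h₂) hδ]
  · norm_num

theorem rampL_neg {δ : ℝ} (hδ : 0 < δ) (u : ℝ) : rampL δ (-u) = 2 - rampL δ u := by
  unfold rampL
  split_ifs <;> first | linarith | ring1 | (obtain rfl : u = 0 := (by linarith); norm_num)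

theorem rampL_le_two {δ : ℝ} (hδ : 0 < δ) (u : ℝ) : rampL δ u ≤ 2 := by
  linarith [rampL_neg hδ u, rampL_nonneg hδ (-u)]

theorem norm_rampL_le_two {δ : ℝ} (hδ : 0 < δ) (u : ℝ) : ‖rampL δ u‖ ≤ 2 := by
  rw [Real.norm_of_nonneg (rampL_nonneg hδ u)]
  exact rampL_le_two hδ u

theorem rampL_le_one {δ : ℝ} (hδ : 0 < δ) {u : ℝ} (hu : u ≤ 0) : rampL δ u ≤ 1 := by
  linarith [rampL_neg hδ u, one_le_rampL hδ (neg_nonneg.2 hu)]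

theorem rampL_self {δ : ℝ} (hδ : 0 < δ) : rampL δ δ = 2 := by
  simp [rampL, hδ.not_ge, (neg_lt_self hδ).not_ge]

theorem rampL_neg_self (δ : ℝ) : rampL δ (-δ) = 0 := if_pos le_rfl

theorem measurable_rampL (δ : ℝ) : Measurable (rampL δ) :=
  measurable_const.ite measurableSet_Iic <|
    (by fun_prop : Measurable fun u : ℝ => (1 + u / δ) ^ 2).ite measurableSet_Iic <|
      (by fun_prop : Measurable fun u : ℝ => 2 - (1 - u / δ) ^ 2).ite measurableSet_Iio
        measurable_const

theorem rampL_sub_ite_nonneg {δ : ℝ} (hδ : 0 < δ) (t : ℝ) :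
    0 ≤ rampL δ t - if 0 ≤ t then 1 else 0 := by
  split_ifs with ht
  · linarith [one_le_rampL hδ ht]
  · linarith [rampL_nonneg hδ t]

theorem rampL_sub_ite_le_one {δ : ℝ} (hδ : 0 < δ) (t : ℝ) :
    rampL δ t - (if 0 ≤ t then 1 else 0) ≤ 1 := by
  split_ifs with ht
  · linarith [rampL_le_two hδ t]
  · linarith [rampL_le_one hδ (not_le.1 ht).le]

theorem mul_ite_eq_sgn_div {a : ℝ} (ha : a = 1 ∨ a = -1) (w t : ℝ) (p : ℝ → ℝ) :
    w * (if a = sgn t then 1 else 0) / p a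
      = w * (if a = -1 then 1 else 0) / p (-1) + (if 0 ≤ t then 1 else 0) * (w * a / p a) := by
  rcases ha with rfl | rfl <;> by_cases ht : 0 ≤ t <;> norm_num [sgn, ht]
  ring

theorem mul_rampL_mul_div {δ : ℝ} (hδ : 0 < δ) {a : ℝ} (ha : a = 1 ∨ a = -1) (w t : ℝ)
    (p : ℝ → ℝ) :
    w * rampL δ (a * t) / p a
      = 2 * (w * (if a = -1 then 1 else 0) / p (-1)) + rampL δ t * (w * a / p a) := by
  rcases ha with rfl | rfl
  · norm_num
    ring
  · rw [neg_one_mul, rampL_neg hδ]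
    norm_num
    ring

theorem MeasureTheory.Integrable.mul_div_of_abs_le_one_of_le {Ω : Type*} [MeasurableSpace Ω]
    {P : Measure Ω} {w u v : Ω → ℝ} {η : ℝ} (hη : 0 < η) (hw : Integrable w P)
    (hu : Measurable u) (hv : Measurable v) (hu₁ : ∀ ω, |u ω| ≤ 1) (hvη : ∀ ω, η ≤ v ω) :
    Integrable (fun ω => w ω * u ω / v ω) P := by
  simp_rw [mul_div_assoc]
  refine hw.mul_bdd (c := 1 / η) (hu.div hv).aestronglyMeasurable (.of_forall fun ω => ?_)
  rw [norm_div, Real.norm_eq_abs, Real.norm_of_nonneg (hη.le.trans (hvη ω))]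
  exact div_le_div₀ zero_le_one (hu₁ ω) hη (hvη ω)

theorem MeasureTheory.Integrable.comp_mul_of_norm_le {Ω 𝒳 : Type*} [MeasurableSpace Ω]
    [MeasurableSpace 𝒳] {μ : Measure Ω} {X : Ω → 𝒳} {ψ : 𝒳 → ℝ} {C : ℝ} {D : Ω → ℝ}
    (hD : Integrable D μ) (hψ : Measurable ψ) (hψC : ∀ x, ‖ψ x‖ ≤ C) (hX : Measurable X) :
    Integrable (fun ω => ψ (X ω) * D ω) μ :=
  hD.bdd_mul (hψ.comp hX).aestronglyMeasurable (.of_forall fun ω => hψC (X ω))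

section CondExp

variable {Ω : Type*} {m m₀ : MeasurableSpace Ω} {μ : Measure Ω} [IsFiniteMeasure μ]

theorem integral_mul_condExp_of_stronglyMeasurable (hm : m ≤ m₀) {c D : Ω → ℝ} {C : ℝ}
    (hc : StronglyMeasurable[m] c) (hcC : ∀ᵐ ω ∂μ, ‖c ω‖ ≤ C) (hD : Integrable D μ) :
    ∫ ω, c ω * (μ[D | m]) ω ∂μ = ∫ ω, c ω * D ω ∂μ := by
  rw [← integral_condExp hm (f := fun ω => c ω * D ω)]
  exact integral_congr_ae (condExp_stronglyMeasurable_mul_of_bound hm hc hD C hcC).symm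

variable {𝒳 : Type*} [MeasurableSpace 𝒳] {X : Ω → 𝒳}

theorem integral_comp_mul_le_integral_max_condExp {ψ : 𝒳 → ℝ} (hψ : Measurable ψ)
    (hψ₀ : ∀ x, 0 ≤ ψ x) (hψ₁ : ∀ x, ψ x ≤ 1) (hX : Measurable X) {D : Ω → ℝ}
    (hD : Integrable D μ) :
    ∫ ω, ψ (X ω) * D ω ∂μ ≤ ∫ ω, max ((μ[D | MeasurableSpace.comap X inferInstance]) ω) 0 ∂μ := by
  have hψC : ∀ x, ‖ψ x‖ ≤ 1 := fun x => by rw [Real.norm_of_nonneg (hψ₀ x)]; exact hψ₁ x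
  rw [← integral_mul_condExp_of_stronglyMeasurable hX.comap_le (c := fun ω => ψ (X ω))
    (hψ.comp (comap_measurable X)).stronglyMeasurable (.of_forall fun ω => hψC (X ω)) hD]
  refine integral_mono (integrable_condExp.comp_mul_of_norm_le hψ hψC hX)
    (integrable_condExp.sup (integrable_const 0)) fun ω => ?_
  rcases le_total 0 ((μ[D | MeasurableSpace.comap X inferInstance]) ω) with h | h
  · rw [max_eq_left h]; nlinarith [hψ₁ (X ω)]
  · rw [max_eq_right h]; nlinarith [hψ₀ (X ω)]

open scoped Classical in
theorem exists_integral_ite_mem_mul_eq_integral_max_condExp (hX : Measurable X) {D : Ω → ℝ}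
    (hD : Integrable D μ) :
    ∃ B : Set 𝒳, MeasurableSet B ∧ ∫ ω, (if X ω ∈ B then 1 else 0) * D ω ∂μ
      = ∫ ω, max ((μ[D | MeasurableSpace.comap X inferInstance]) ω) 0 ∂μ := by
  obtain ⟨B, hB, hKB⟩ : MeasurableSet[MeasurableSpace.comap X inferInstance]
      {ω | 0 ≤ (μ[D | MeasurableSpace.comap X inferInstance]) ω} :=
    measurableSet_le measurable_const stronglyMeasurable_condExp.measurable
  have hc : StronglyMeasurable[MeasurableSpace.comap X inferInstance]
      fun ω => if X ω ∈ B then (1 : ℝ) else 0 :=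
    (measurable_const.ite (hB.preimage (comap_measurable X)) measurable_const).stronglyMeasurable
  refine ⟨B, hB, ?_⟩
  rw [← integral_mul_condExp_of_stronglyMeasurable hX.comap_le (C := 1) hc
    (.of_forall fun ω => by split_ifs <;> norm_num) hD]
  refine integral_congr_ae (.of_forall fun ω => ?_)
  have hmem : X ω ∈ B ↔ 0 ≤ (μ[D | MeasurableSpace.comap X inferInstance]) ω :=
    Set.ext_iff.1 hKB ω
  dsimp only
  by_cases h : X ω ∈ B
  · rw [if_pos h, one_mul, max_eq_left (hmem.1 h)]
  · rw [if_neg h, zero_mul, max_eq_right (not_le.1 (mt hmem.2 h)).le]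

end CondExp

section CVaR

variable {Ω 𝒳 : Type*}

noncomputable def cvarWeight (X : Ω → 𝒳) (A Y Δc : Ω → ℝ) (S : ℝ × 𝒳 × ℝ → ℝ) (γ β : ℝ)
    (ω : Ω) : ℝ :=
  β * γ - Δc ω * (β - Y ω) * (if Y ω ≤ β then 1 else 0) / S (Y ω, X ω, A ω)

noncomputable def cvarBaseline (X : Ω → 𝒳) (A Y Δc : Ω → ℝ) (S : ℝ × 𝒳 × ℝ → ℝ)
    (π : ℝ × 𝒳 → ℝ) (γ β : ℝ) (ω : Ω) : ℝ :=
  cvarWeight X A Y Δc S γ β ω * (if A ω = -1 then 1 else 0) / π (-1, X ω)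

noncomputable def cvarContrast (X : Ω → 𝒳) (A Y Δc : Ω → ℝ) (S : ℝ × 𝒳 × ℝ → ℝ)
    (π : ℝ × 𝒳 → ℝ) (γ β : ℝ) (ω : Ω) : ℝ :=
  cvarWeight X A Y Δc S γ β ω * A ω / π (A ω, X ω)

noncomputable def cvarOptValue [MeasurableSpace Ω] [MeasurableSpace 𝒳] (P : Measure Ω)
    (X : Ω → 𝒳) (A Y Δc : Ω → ℝ) (S : ℝ × 𝒳 × ℝ → ℝ) (π : ℝ × 𝒳 → ℝ) (γ β : ℝ) : ℝ :=
  ∫ ω, cvarBaseline X A Y Δc S π γ β ω ∂P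
    + ∫ ω, max ((P[cvarContrast X A Y Δc S π γ β | MeasurableSpace.comap X inferInstance]) ω) 0 ∂P

variable [MeasurableSpace Ω] {P : Measure Ω} {X : Ω → 𝒳} {A Y Δc : Ω → ℝ}
  {S : ℝ × 𝒳 × ℝ → ℝ} {π : ℝ × 𝒳 → ℝ} {γ : ℝ}

theorem measurable_cvarWeight [MeasurableSpace 𝒳] (hX : Measurable X) (hA : Measurable A)
    (hY : Measurable Y) (hΔc : Measurable Δc) (hS : Measurable S) (β : ℝ) :
    Measurable (cvarWeight X A Y Δc S γ β) :=
  measurable_const.sub <| ((hΔc.mul (measurable_const.sub hY)).mul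
    (measurable_const.ite (measurableSet_le hY measurable_const) measurable_const)).div
      (hS.comp (hY.prodMk (hX.prodMk hA)))

theorem abs_cvarWeight_le (hY₀ : ∀ᵐ ω ∂P, 0 ≤ Y ω) (hΔval : ∀ ω, Δc ω = 0 ∨ Δc ω = 1)
    {ηC : ℝ} (hηC : 0 < ηC) (hSb : ∀ t x a, ηC ≤ S (t, x, a) ∧ S (t, x, a) ≤ 1) (β : ℝ) :
    ∀ᵐ ω ∂P, |cvarWeight X A Y Δc S γ β ω| ≤ |β * γ| + |β| / ηC := by
  filter_upwards [hY₀] with ω hYω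
  set N := Δc ω * (β - Y ω) * (if Y ω ≤ β then 1 else 0)
  have hN : 0 ≤ N ∧ N ≤ |β| := by
    have := le_abs_self β
    have := abs_nonneg β
    simp only [N]
    split_ifs <;> rcases hΔval ω with h | h <;> simp only [h] <;> constructor <;> nlinarith
  have hSω := hSb (Y ω) (X ω) (A ω)
  have hT : |N / S (Y ω, X ω, A ω)| ≤ |β| / ηC := by
    rw [abs_of_nonneg (div_nonneg hN.1 (hηC.le.trans hSω.1))]
    exact div_le_div₀ (abs_nonneg β) hN.2 hηC hSω.1
  exact (abs_sub _ _).trans (by gcongr)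

theorem integrable_cvarWeight [MeasurableSpace 𝒳] [IsFiniteMeasure P] (hX : Measurable X)
    (hA : Measurable A) (hY : Measurable Y) (hY₀ : ∀ᵐ ω ∂P, 0 ≤ Y ω) (hΔc : Measurable Δc)
    (hΔval : ∀ ω, Δc ω = 0 ∨ Δc ω = 1) (hS : Measurable S) {ηC : ℝ} (hηC : 0 < ηC)
    (hSb : ∀ t x a, ηC ≤ S (t, x, a) ∧ S (t, x, a) ≤ 1) (β : ℝ) :
    Integrable (cvarWeight X A Y Δc S γ β) P :=
  (integrable_const _).mono' (measurable_cvarWeight hX hA hY hΔc hS β).aestronglyMeasurable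
    (abs_cvarWeight_le hY₀ hΔval hηC hSb β)

theorem integrable_cvarBaseline [MeasurableSpace 𝒳] (hX : Measurable X) (hA : Measurable A)
    (hπ : Measurable π) {η : ℝ} (hη : 0 < η) (hπb : ∀ a x, η ≤ π (a, x) ∧ π (a, x) ≤ 1)
    {β : ℝ} (hw : Integrable (cvarWeight X A Y Δc S γ β) P) :
    Integrable (cvarBaseline X A Y Δc S π γ β) P :=
  hw.mul_div_of_abs_le_one_of_le hη
    (measurable_const.ite (hA (measurableSet_singleton _)) measurable_const)
    (hπ.comp (measurable_const.prodMk hX)) (fun ω => by split_ifs <;> norm_num)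
    (fun ω => (hπb _ _).1)

theorem integrable_cvarContrast [MeasurableSpace 𝒳] (hX : Measurable X) (hA : Measurable A)
    (hAval : ∀ ω, A ω = 1 ∨ A ω = -1) (hπ : Measurable π) {η : ℝ} (hη : 0 < η)
    (hπb : ∀ a x, η ≤ π (a, x) ∧ π (a, x) ≤ 1) {β : ℝ}
    (hw : Integrable (cvarWeight X A Y Δc S γ β) P) :
    Integrable (cvarContrast X A Y Δc S π γ β) P :=
  hw.mul_div_of_abs_le_one_of_le hη hA (hπ.comp (hA.prodMk hX))
    (fun ω => by rcases hAval ω with h | h <;> simp [h]) (fun ω => (hπb _ _).1)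

section Decomposition

variable [MeasurableSpace 𝒳] {g : 𝒳 → ℝ} {β : ℝ}

theorem Vcvar_sgn_eq (hX : Measurable X) (hAval : ∀ ω, A ω = 1 ∨ A ω = -1)
    (hg : Measurable g) (hb : Integrable (cvarBaseline X A Y Δc S π γ β) P)
    (hc : Integrable (cvarContrast X A Y Δc S π γ β) P) :
    Vcvar P X A Y Δc S π γ (fun x => sgn (g x)) β
      = ∫ ω, cvarBaseline X A Y Δc S π γ β ω ∂P
        + ∫ ω, (if 0 ≤ g (X ω) then 1 else 0) * cvarContrast X A Y Δc S π γ β ω ∂P := by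
  rw [← integral_add hb (hc.comp_mul_of_norm_le (C := 1)
    (measurable_const.ite (measurableSet_le measurable_const hg) measurable_const)
    (fun x => by split_ifs <;> norm_num) hX)]
  exact integral_congr_ae (.of_forall fun ω =>
    mul_ite_eq_sgn_div (hAval ω) _ _ fun a => π (a, X ω))

theorem VLcvar_eq {δ : ℝ} (hδ : 0 < δ) (hX : Measurable X) (hAval : ∀ ω, A ω = 1 ∨ A ω = -1)
    (hg : Measurable g) (hb : Integrable (cvarBaseline X A Y Δc S π γ β) P)
    (hc : Integrable (cvarContrast X A Y Δc S π γ β) P) :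
    VLcvar P X A Y Δc S π γ δ g β
      = 2 * ∫ ω, cvarBaseline X A Y Δc S π γ β ω ∂P
        + ∫ ω, rampL δ (g (X ω)) * cvarContrast X A Y Δc S π γ β ω ∂P := by
  rw [← integral_const_mul, ← integral_add (hb.const_mul 2)
    (hc.comp_mul_of_norm_le (ψ := fun x => rampL δ (g x)) ((measurable_rampL δ).comp hg)
      (fun x => norm_rampL_le_two hδ _) hX)]
  exact integral_congr_ae (.of_forall fun ω =>
    mul_rampL_mul_div hδ (hAval ω) _ _ fun a => π (a, X ω))

variable [IsFiniteMeasure P]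

theorem Vcvar_sgn_le_cvarOptValue (hX : Measurable X) (hAval : ∀ ω, A ω = 1 ∨ A ω = -1)
    (hg : Measurable g) (hb : Integrable (cvarBaseline X A Y Δc S π γ β) P)
    (hc : Integrable (cvarContrast X A Y Δc S π γ β) P) :
    Vcvar P X A Y Δc S π γ (fun x => sgn (g x)) β ≤ cvarOptValue P X A Y Δc S π γ β := by
  rw [Vcvar_sgn_eq hX hAval hg hb hc, cvarOptValue]
  exact add_le_add_right (integral_comp_mul_le_integral_max_condExp
    (ψ := fun x => if 0 ≤ g x then 1 else 0)
    (measurable_const.ite (measurableSet_le measurable_const hg) measurable_const)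
    (fun x => by split_ifs <;> norm_num) (fun x => by split_ifs <;> norm_num) hX hc) _

theorem VLcvar_sub_Vcvar_sgn_le_cvarOptValue {δ : ℝ} (hδ : 0 < δ) (hX : Measurable X)
    (hAval : ∀ ω, A ω = 1 ∨ A ω = -1) (hg : Measurable g)
    (hb : Integrable (cvarBaseline X A Y Δc S π γ β) P)
    (hc : Integrable (cvarContrast X A Y Δc S π γ β) P) :
    VLcvar P X A Y Δc S π γ δ g β - Vcvar P X A Y Δc S π γ (fun x => sgn (g x)) β
      ≤ cvarOptValue P X A Y Δc S π γ β := by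
  have hL : Measurable fun x => rampL δ (g x) := (measurable_rampL δ).comp hg
  have hind : Measurable fun x => if 0 ≤ g x then (1 : ℝ) else 0 :=
    measurable_const.ite (measurableSet_le measurable_const hg) measurable_const
  have hgap := integral_comp_mul_le_integral_max_condExp
    (ψ := fun x => rampL δ (g x) - if 0 ≤ g x then 1 else 0) (hL.sub hind)
    (fun x => rampL_sub_ite_nonneg hδ _) (fun x => rampL_sub_ite_le_one hδ _) hX hc
  simp_rw [sub_mul] at hgap
  rw [integral_sub (hc.comp_mul_of_norm_le hL (fun x => norm_rampL_le_two hδ _) hX)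
    (hc.comp_mul_of_norm_le (C := 1) hind (fun x => by split_ifs <;> norm_num) hX)] at hgap
  rw [VLcvar_eq hδ hX hAval hg hb hc, Vcvar_sgn_eq hX hAval hg hb hc, cvarOptValue]
  linarith

theorem exists_VLcvar_eq_two_mul_cvarOptValue {δ : ℝ} (hδ : 0 < δ) (hX : Measurable X)
    (hAval : ∀ ω, A ω = 1 ∨ A ω = -1) (hb : Integrable (cvarBaseline X A Y Δc S π γ β) P)
    (hc : Integrable (cvarContrast X A Y Δc S π γ β) P) :
    ∃ g : 𝒳 → ℝ, Measurable g
      ∧ VLcvar P X A Y Δc S π γ δ g β = 2 * cvarOptValue P X A Y Δc S π γ β := by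
  classical
  obtain ⟨B, hB, hBopt⟩ := exists_integral_ite_mem_mul_eq_integral_max_condExp hX hc
  have hg : Measurable fun x => if x ∈ B then δ else -δ :=
    measurable_const.ite hB measurable_const
  have hL : ∀ x, rampL δ (if x ∈ B then δ else -δ) = 2 * if x ∈ B then 1 else 0 := fun x => by
    split_ifs
    · rw [rampL_self hδ, mul_one]
    · rw [rampL_neg_self, mul_zero]
  refine ⟨_, hg, ?_⟩
  rw [VLcvar_eq hδ hX hAval hg hb hc, cvarOptValue, ← hBopt]
  simp_rw [hL, mul_assoc]
  rw [integral_const_mul, mul_add]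

end Decomposition

end CVaR

theorem stmt_8_general {Ω 𝒳 : Type*} [MeasurableSpace Ω] [MeasurableSpace 𝒳]
    (P : Measure Ω) [IsProbabilityMeasure P]
    (X : Ω → 𝒳) (hX : Measurable X)
    (A : Ω → ℝ) (hA : Measurable A) (hAval : ∀ ω, A ω = 1 ∨ A ω = -1)
    (Y : Ω → ℝ) (hY : Measurable Y)
    (h : ℝ) (hYb : ∀ᵐ ω ∂P, 0 ≤ Y ω ∧ Y ω ≤ h)
    (Δc : Ω → ℝ) (hΔm : Measurable Δc) (hΔval : ∀ ω, Δc ω = 0 ∨ Δc ω = 1)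
    (π : ℝ × 𝒳 → ℝ) (hπ : Measurable π) (η : ℝ) (hη : 0 < η)
    (hπb : ∀ a x, η ≤ π (a, x) ∧ π (a, x) ≤ 1)
    (S : ℝ × 𝒳 × ℝ → ℝ) (hS : Measurable S) (ηC : ℝ) (hηC : 0 < ηC)
    (hSb : ∀ t x a, ηC ≤ S (t, x, a) ∧ S (t, x, a) ≤ 1)
    (γ : ℝ)
    (δ : ℝ) (hδ : 0 < δ)
    (ftilde : 𝒳 → ℝ) (αtilde : ℝ)
    (hopt : ∀ f : 𝒳 → ℝ, Measurable f → ∀ α : ℝ,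
      VLcvar P X A Y Δc S π γ δ f α ≤ VLcvar P X A Y Δc S π γ δ ftilde αtilde) :
    ∀ f : 𝒳 → ℝ, Measurable f → ∀ α : ℝ,
    ∀ f' : 𝒳 → ℝ, Measurable f' → ∀ α' : ℝ,
      Vcvar P X A Y Δc S π γ (fun x => sgn (f' x)) α'
          - Vcvar P X A Y Δc S π γ (fun x => sgn (f x)) α
        ≤ VLcvar P X A Y Δc S π γ δ ftilde αtilde - VLcvar P X A Y Δc S π γ δ f α := by
  intro f hf α f' hf' α'
  have hw (β : ℝ) : Integrable (cvarWeight X A Y Δc S γ β) P :=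
    integrable_cvarWeight hX hA hY (hYb.mono fun _ hω => hω.1) hΔm hΔval hS hηC hSb β
  have hb (β : ℝ) : Integrable (cvarBaseline X A Y Δc S π γ β) P :=
    integrable_cvarBaseline hX hA hπ hη hπb (hw β)
  have hc (β : ℝ) : Integrable (cvarContrast X A Y Δc S π γ β) P :=
    integrable_cvarContrast hX hA hAval hπ hη hπb (hw β)
  have hopt_ge (β : ℝ) :
      2 * cvarOptValue P X A Y Δc S π γ β ≤ VLcvar P X A Y Δc S π γ δ ftilde αtilde := by
    obtain ⟨g, hg, hVL⟩ := exists_VLcvar_eq_two_mul_cvarOptValue hδ hX hAval (hb β) (hc β)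
    exact hVL ▸ hopt g hg β
  have hle := Vcvar_sgn_le_cvarOptValue hX hAval hf' (hb α') (hc α')
  have hgap := VLcvar_sub_Vcvar_sgn_le_cvarOptValue hδ hX hAval hf (hb α) (hc α)
  linarith [hopt_ge α, hopt_ge α']

/-- Theorem 2 of the paper: excess-risk bound for the CVaR criterion. If
`(f̃, α̃)` maximizes the surrogate value `V'_L` over measurable `f` and `α ∈ ℝ`, then for
every measurable `f` and `α ∈ ℝ`, the supremum over measurable `f'` and `α' ∈ ℝ` of
`V'(sign ∘ f', α')`, minus `V'(sign ∘ f, α)`, is at most `V'_L(f̃, α̃) - V'_L(f, α)`;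
equivalently, for all measurable `f'` and `α'`,
`V'(sign∘f', α') - V'(sign∘f, α) ≤ V'_L(f̃, α̃) - V'_L(f, α)`. -/
theorem stmt_8 {Ω 𝒳 : Type*} [MeasurableSpace Ω] [MeasurableSpace 𝒳]
    (P : Measure Ω) [IsProbabilityMeasure P]
    (X : Ω → 𝒳) (hX : Measurable X)
    (A : Ω → ℝ) (hA : Measurable A) (hAval : ∀ ω, A ω = 1 ∨ A ω = -1)
    (Y : Ω → ℝ) (hY : Measurable Y)
    (h : ℝ) (hh : 0 < h) (hYb : ∀ᵐ ω ∂P, 0 ≤ Y ω ∧ Y ω ≤ h)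
    (Δc : Ω → ℝ) (hΔm : Measurable Δc) (hΔval : ∀ ω, Δc ω = 0 ∨ Δc ω = 1)
    (π : ℝ × 𝒳 → ℝ) (hπ : Measurable π) (η : ℝ) (hη : 0 < η)
    (hπb : ∀ a x, η ≤ π (a, x) ∧ π (a, x) ≤ 1)
    (hπver : ∀ a : ℝ, (a = 1 ∨ a = -1) →
      (fun ω => π (a, X ω)) =ᵐ[P]
        P[fun ω => if A ω = a then (1 : ℝ) else 0 |
          MeasurableSpace.comap X inferInstance])
    (S : ℝ × 𝒳 × ℝ → ℝ) (hS : Measurable S) (ηC : ℝ) (hηC : 0 < ηC)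
    (hSb : ∀ t x a, ηC ≤ S (t, x, a) ∧ S (t, x, a) ≤ 1)
    (γ : ℝ) (hγ : γ ∈ Set.Ioo (0 : ℝ) 1)
    (δ : ℝ) (hδ : 0 < δ)
    (ftilde : 𝒳 → ℝ) (hftilde : Measurable ftilde) (αtilde : ℝ)
    (hopt : ∀ f : 𝒳 → ℝ, Measurable f → ∀ α : ℝ,
      VLcvar P X A Y Δc S π γ δ f α ≤ VLcvar P X A Y Δc S π γ δ ftilde αtilde) :
    ∀ f : 𝒳 → ℝ, Measurable f → ∀ α : ℝ,
    ∀ f' : 𝒳 → ℝ, Measurable f' → ∀ α' : ℝ,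
      Vcvar P X A Y Δc S π γ (fun x => sgn (f' x)) α'
          - Vcvar P X A Y Δc S π γ (fun x => sgn (f x)) α
        ≤ VLcvar P X A Y Δc S π γ δ ftilde αtilde - VLcvar P X A Y Δc S π γ δ f α :=
  stmt_8_general P X hX A hA hAval Y hY h hYb Δc hΔm hΔval π hπ η hη hπb S hS ηC hηC hSb γ δ hδ
    ftilde αtilde hopt
end
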